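/- Let 0 < λ < μ. At s = ζ⁺ the quadratic in ξ has a double root equal to √(λμ/2) - μ; that is, for every real ξ, (ζ⁺+μ)ξ² + (μ² - λμ/2 + (μ-λ)ζ⁺)ξ - λμζ⁺/2 = (ζ⁺+μ)·(ξ - (√(λμ/2) - μ))². -/

import Mathlib

/-!
Write `a = √μ` and `b = √(λ/2)`, so that `ζ⁺ = -a²(a - b)² / D` with `D = b² + (a - b)² > 0`.
After clearing the denominator `D` the claimed identity is polynomial in `a, b, ξ`, and it is
`-(ξ + a²)` times the defining relation `ζ⁺ D = -a²(a - b)²`.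
-/

noncomputable section

/-- The ramification point `ζ⁺`. -/
def zetaPlus (lam mu : ℝ) : ℝ :=
  -mu * (Real.sqrt mu - Real.sqrt (lam / 2)) ^ 2 /
    (lam / 2 + (Real.sqrt mu - Real.sqrt (lam / 2)) ^ 2)

theorem zetaPlus_mul_denom {lam : ℝ} (hlam : 0 < lam) (mu : ℝ) :
    zetaPlus lam mu * (lam / 2 + (Real.sqrt mu - Real.sqrt (lam / 2)) ^ 2) =
      -mu * (Real.sqrt mu - Real.sqrt (lam / 2)) ^ 2 :=
  div_mul_cancel₀ _ (by positivity)

theorem quadratic_eq_mul_sq_of_mul_denom {lam mu a b z : ℝ} (ha : a ^ 2 = mu)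
    (hb : b ^ 2 = lam / 2) (hz : z * (lam / 2 + (a - b) ^ 2) = -mu * (a - b) ^ 2) (ξ : ℝ) :
    (z + mu) * ξ ^ 2 + (mu ^ 2 - lam * mu / 2 + (mu - lam) * z) * ξ - lam * mu * z / 2 =
      (z + mu) * (ξ - (b * a - mu)) ^ 2 := by
  obtain rfl : lam = 2 * b ^ 2 := by linarith
  subst ha
  linear_combination (-(ξ + a ^ 2)) * hz

theorem stmt_2 (lam mu : ℝ) (hlam : 0 < lam) (hmu : lam < mu) :
    ∀ ξ : ℝ,
      (zetaPlus lam mu + mu) * ξ ^ 2 +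
          (mu ^ 2 - lam * mu / 2 + (mu - lam) * zetaPlus lam mu) * ξ -
          lam * mu * zetaPlus lam mu / 2 =
        (zetaPlus lam mu + mu) * (ξ - (Real.sqrt (lam * mu / 2) - mu)) ^ 2 := by
  intro ξ
  have hmu0 : 0 < mu := hlam.trans hmu
  have hsqrt : Real.sqrt (lam * mu / 2) = Real.sqrt (lam / 2) * Real.sqrt mu := by
    rw [← Real.sqrt_mul (by positivity)]
    ring_nf
  rw [hsqrt]
  exact quadratic_eq_mul_sq_of_mul_denom (Real.sq_sqrt hmu0.le) (Real.sq_sqrt (by positivity))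
    (zetaPlus_mul_denom hlam mu) ξ
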